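/- For every pair of incompatible table types Table(σ₁) and Table(σ₂), there exists a base type interpolant: a table type T such that (1) Table(σ₁) <: T, (2) T is not compatible with Table(σ₂), and (3) every table type T' with T <: T' and T' ≠ T is compatible with Table(σ₂). Moreover, T can be chosen to be a single-column table type Table({c : ι}), where c is a shared column witnessing the incompatibility of σ₁ and σ₂ and ι is a column-type interpolant for σ₁(c) and σ₂(c). -/

import Mathlib

/-- Column types in the refinement type system. -/
inductive ColTy where
  | top | quantitative | qualitative | discrete | continuous
  | nominal | ordinal | temporal
deriving DecidableEq

/-- The subtyping axioms on column types. -/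
inductive ColSubAx : ColTy → ColTy → Prop where
  | quant_top : ColSubAx .quantitative .top
  | qual_top  : ColSubAx .qualitative .top
  | disc_quant : ColSubAx .discrete .quantitative
  | cont_quant : ColSubAx .continuous .quantitative
  | nom_qual  : ColSubAx .nominal .qualitative
  | ord_qual  : ColSubAx .ordinal .qualitative
  | temp_qual : ColSubAx .temporal .qualitative

/-- Column subtyping: the reflexive-transitive closure of the axioms. -/
def ColSub : ColTy → ColTy → Prop := Relation.ReflTransGen ColSubAx

/-- Two column types are compatible iff one is a subtype of the other. -/
def ColCompat (β₁ β₂ : ColTy) : Prop := ColSub β₁ β₂ ∨ ColSub β₂ β₁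

/-- A schema is a finite partial map from column names to column types. -/
abbrev Schema := Finmap (fun _ : String => ColTy)

/-- Table subtyping (a table type `Table σ` is determined by its schema `σ`;
    since `Finmap` is quotiented by permutation, the permutation rule is implicit). -/
inductive TableSub : Schema → Schema → Prop where
  | width (σ₁ σ₂ : Schema) :
      (∀ c τ, σ₂.lookup c = some τ → σ₁.lookup c = some τ) → TableSub σ₁ σ₂
  | depth (σ₁ σ₂ : Schema) :
      σ₁.keys = σ₂.keys →
      (∀ c τ₁ τ₂, σ₁.lookup c = some τ₁ → σ₂.lookup c = some τ₂ → ColSub τ₁ τ₂) →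
      TableSub σ₁ σ₂
  | trans {σ₁ σ₂ σ₃ : Schema} : TableSub σ₁ σ₂ → TableSub σ₂ σ₃ → TableSub σ₁ σ₃

/-- Table compatibility: every shared column's types are compatible. -/
def TableCompat (σ₁ σ₂ : Schema) : Prop :=
  ∀ c τ₁ τ₂, σ₁.lookup c = some τ₁ → σ₂.lookup c = some τ₂ → ColCompat τ₁ τ₂

/-!
A column-type interpolant for incompatible `τ₁`, `τ₂` is a maximal element among the supertypes
of `τ₁` that are incompatible with `τ₂`; it exists because column subtyping is a partial order
(the axioms strictly decrease the depth in the hierarchy) on a finite type. Given a shared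
column `c` on which `σ₁` and `σ₂` are incompatible, with interpolant `ι` for `σ₁(c)` and `σ₂(c)`,
the table `{c : ι}` is reached from `σ₁` by dropping columns and widening `c`. Subtyping never
adds columns or narrows them, so a supertype of `{c : ι}` other than itself has at most the
column `c`, with a type strictly above `ι`, hence compatible with `σ₂(c)`.
-/

theorem Relation.ReflTransGen.rank_le {α β : Type*} [Preorder β] {r : α → α → Prop}
    {f : α → β} (hf : ∀ a b, r a b → f b < f a) {a b : α} (h : ReflTransGen r a b) :
    f b ≤ f a := by
  induction h with
  | refl => exact le_rfl
  | tail _ hbc ih => exact (hf _ _ hbc).le.trans ih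

theorem Relation.ReflTransGen.antisymm_of_rank {α β : Type*} [Preorder β] {r : α → α → Prop}
    {f : α → β} (hf : ∀ a b, r a b → f b < f a) {a b : α} (hab : ReflTransGen r a b)
    (hba : ReflTransGen r b a) : a = b := by
  rcases hab.cases_head with rfl | ⟨c, hac, hcb⟩
  · rfl
  · exact absurd ((hba.rank_le hf).trans (hcb.rank_le hf)) (hf a c hac).not_ge

namespace ColTy

instance : Fintype ColTy where
  elems := {top, quantitative, qualitative, discrete, continuous, nominal, ordinal, temporal}
  complete x := by cases x <;> simp

def depth : ColTy → ℕ
  | top => 0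
  | quantitative | qualitative => 1
  | discrete | continuous | nominal | ordinal | temporal => 2

theorem depth_lt_of_colSubAx {a b : ColTy} (h : ColSubAx a b) : b.depth < a.depth := by
  cases h <;> decide

instance : PartialOrder ColTy where
  le := ColSub
  le_refl _ := Relation.ReflTransGen.refl
  le_trans _ _ _ := Relation.ReflTransGen.trans
  le_antisymm _ _ := Relation.ReflTransGen.antisymm_of_rank fun _ _ h => depth_lt_of_colSubAx h

theorem exists_interpolant {τ₁ τ₂ : ColTy} (h : ¬ColCompat τ₁ τ₂) :
    ∃ ι : ColTy, ColSub τ₁ ι ∧ ¬ColCompat ι τ₂ ∧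
      ∀ β : ColTy, ColSub ι β → β ≠ ι → ColCompat β τ₂ := by
  obtain ⟨ι, hτ₁ι, hmax⟩ := Finite.exists_le_maximal (p := fun ι => ¬ColCompat ι τ₂) h
  exact ⟨ι, hτ₁ι, hmax.prop, fun β hιβ hne => by_contra fun hβ => hne (hmax.eq_of_ge hβ hιβ)⟩

end ColTy

namespace Finmap

variable {α : Type*} [DecidableEq α]

theorem lookup_singleton_eq_some {β : Type*} {a x : α} {b b' : β} :
    (singleton a b : Finmap fun _ : α => β).lookup x = some b' ↔ x = a ∧ b = b' := by
  by_cases hx : x = a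
  · subst hx
    simp [lookup_singleton_eq]
  · simp [lookup_eq_none.mpr (by simpa [mem_singleton] : x ∉ (singleton a b : Finmap fun _ : α => β)), hx]

theorem eq_singleton_of_lookup {β : α → Type*} {s : Finmap β} {a : α} {b : β a}
    (hs : ∀ x ∈ s, x = a) (ha : s.lookup a = some b) : s = singleton a b := by
  refine ext_lookup fun x => ?_
  by_cases hx : x = a
  · subst hx
    rw [ha, lookup_singleton_eq]
  · rw [lookup_eq_none.mpr (mt (hs x) hx), lookup_eq_none.mpr (by simpa [mem_singleton])]

end Finmap

theorem TableSub.exists_lookup {σ σ' : Schema} (h : TableSub σ σ') {c : String} {τ' : ColTy}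
    (hc : σ'.lookup c = some τ') : ∃ τ, σ.lookup c = some τ ∧ ColSub τ τ' := by
  induction h generalizing τ' with
  | width _ _ hw => exact ⟨τ', hw c τ' hc, Relation.ReflTransGen.refl⟩
  | depth σa σb hkeys hd =>
    have hmem : c ∈ σa := by
      rw [← Finmap.mem_keys, hkeys, Finmap.mem_keys]
      exact Finmap.mem_of_lookup_eq_some hc
    obtain ⟨τ, hτ⟩ := Finmap.mem_iff.mp hmem
    exact ⟨τ, hτ, hd c τ τ' hτ hc⟩
  | trans _ _ ih₁ ih₂ =>
    obtain ⟨τ, hτ, hττ'⟩ := ih₂ hc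
    obtain ⟨τ₀, hτ₀, hτ₀τ⟩ := ih₁ hτ
    exact ⟨τ₀, hτ₀, hτ₀τ.trans hττ'⟩

theorem tableSub_singleton_of_lookup {σ : Schema} {c : String} {τ ι : ColTy}
    (h : σ.lookup c = some τ) (hτι : ColSub τ ι) : TableSub σ (Finmap.singleton c ι) := by
  refine .trans (σ₂ := Finmap.singleton c τ) (.width _ _ fun x τ' hx => ?_) (.depth _ _ ?_ ?_)
  · obtain ⟨rfl, rfl⟩ := Finmap.lookup_singleton_eq_some.mp hx
    exact h
  · simp [Finmap.keys_singleton]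
  · intro x τa τb ha hb
    obtain ⟨-, rfl⟩ := Finmap.lookup_singleton_eq_some.mp ha
    obtain ⟨-, rfl⟩ := Finmap.lookup_singleton_eq_some.mp hb
    exact hτι

theorem tableCompat_of_singleton_tableSub {σ' σ₂ : Schema} {c : String} {ι τ₂ : ColTy}
    (hσ' : TableSub (Finmap.singleton c ι) σ') (hne : σ' ≠ Finmap.singleton c ι)
    (h₂ : σ₂.lookup c = some τ₂) (hι : ∀ β : ColTy, ColSub ι β → β ≠ ι → ColCompat β τ₂) :
    TableCompat σ' σ₂ := by
  have hcol : ∀ x τ, σ'.lookup x = some τ → x = c ∧ ColSub ι τ := fun x τ hx => by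
    obtain ⟨τ₀, hτ₀, hτ₀τ⟩ := hσ'.exists_lookup hx
    obtain ⟨rfl, rfl⟩ := Finmap.lookup_singleton_eq_some.mp hτ₀
    exact ⟨rfl, hτ₀τ⟩
  intro x τ τb hx hb
  obtain ⟨rfl, hιτ⟩ := hcol x τ hx
  obtain rfl : τb = τ₂ := Option.some_injective _ (hb.symm.trans h₂)
  refine hι τ hιτ fun hτ => hne (Finmap.eq_singleton_of_lookup (fun y hy => ?_) (hτ ▸ hx))
  obtain ⟨τy, hτy⟩ := Finmap.mem_iff.mp hy
  exact (hcol y τy hτy).1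

/-- Every pair of incompatible table types has a base type interpolant, which can be
    chosen as a single-column table whose column type is a column-type interpolant for
    a shared column witnessing the incompatibility. -/
theorem exists_table_interpolant (σ₁ σ₂ : Schema) (h : ¬ TableCompat σ₁ σ₂) :
    ∃ σ : Schema,
      TableSub σ₁ σ ∧
      ¬ TableCompat σ σ₂ ∧
      (∀ σ' : Schema, TableSub σ σ' → σ' ≠ σ → TableCompat σ' σ₂) ∧
      -- Moreover, σ can be chosen to be a single-column table type Table({c : ι}):
      (∃ (c : String) (ι τ₁ τ₂ : ColTy),
        σ = Finmap.singleton c ι ∧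
        σ₁.lookup c = some τ₁ ∧ σ₂.lookup c = some τ₂ ∧ ¬ ColCompat τ₁ τ₂ ∧
        ColSub τ₁ ι ∧ ¬ ColCompat ι τ₂ ∧
        (∀ β' : ColTy, ColSub ι β' → β' ≠ ι → ColCompat β' τ₂)) := by
  simp only [TableCompat, not_forall] at h
  obtain ⟨c, τ₁, τ₂, h₁, h₂, hτ₁τ₂⟩ := h
  obtain ⟨ι, hτ₁ι, hιτ₂, hmax⟩ := ColTy.exists_interpolant hτ₁τ₂
  refine ⟨Finmap.singleton c ι, tableSub_singleton_of_lookup h₁ hτ₁ι,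
    fun hc => hιτ₂ (hc c ι τ₂ Finmap.lookup_singleton_eq h₂),
    fun σ' hσ' hne => tableCompat_of_singleton_tableSub hσ' hne h₂ hmax,
    c, ι, τ₁, τ₂, rfl, h₁, h₂, hτ₁τ₂, hτ₁ι, hιτ₂, hmax⟩
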